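/- arXiv:2207.09599 — 5 statements merged into one kernel-verified Lean document; each statement's English description precedes it below -/
import Mathlib

section
/- Let X be a finite measure space with measure μ of total mass vol(X), and let q : X → ℝ_{≥0} be measurable and bounded with m(t) := μ({x : q(x) ≤ t}) satisfying m(t) ≤ C·t^κ for all small t > 0, where κ ∈ (0,1]. Let χ ∈ C_0^∞((-1/2,2);[0,1]) with χ ≡ 1 on [0,1]. Then ∫_X log(q + α·χ(q/α)) dμ = ∫_X log(q) dμ + O(α^κ) as α → 0. -/
open MeasureTheory Set Real

lemma key_lintegral {X : Type*} [MeasurableSpace X] (μ : Measure X)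
    (q : X → ℝ) (hq_meas : Measurable q) (hq_nonneg : ∀ x, 0 ≤ q x)
    (κ C t₀ : ℝ) (hκ0 : 0 < κ) (hC : 0 < C) (ht₀ : 0 < t₀)
    (hm : ∀ t : ℝ, 0 < t → t ≤ t₀ →
      μ {x | q x ≤ t} ≤ ENNReal.ofReal (C * t ^ κ))
    (s r : ℝ) (hs : 0 < s) (hst : s ≤ t₀) (hr : 1 ≤ r) :
    ∫⁻ x, ENNReal.ofReal
        (Set.indicator {y | q y ≤ s} (fun y => Real.log (r * s / q y)) x) ∂μ
      ≤ ENNReal.ofReal (C * (r * s) ^ κ * κ⁻¹) := by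
  have hrs : 0 < r * s := by nlinarith
  have hS : MeasurableSet {y | q y ≤ s} := hq_meas measurableSet_Iic
  have step1 : ∫⁻ x, ENNReal.ofReal
        (Set.indicator {y | q y ≤ s} (fun y => Real.log (r * s / q y)) x) ∂μ
      = ∫⁻ x in {y | q y ≤ s}, ENNReal.ofReal (Real.log (r * s / q x)) ∂μ := by
    rw [← lintegral_indicator hS]
    congr 1; ext x
    by_cases hx : x ∈ {y | q y ≤ s} <;> simp [hx]
  rw [step1]
  have hnn : 0 ≤ᵐ[μ.restrict {y | q y ≤ s}] fun x => Real.log (r * s / q x) := by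
    refine Filter.eventually_of_mem (self_mem_ae_restrict hS) ?_
    intro x hx
    rcases eq_or_lt_of_le (hq_nonneg x) with h0 | h0
    · simp [← h0]
    · exact Real.log_nonneg ((one_le_div h0).2 (le_trans hx (by nlinarith)))
  have hmble : AEMeasurable (fun x => Real.log (r * s / q x))
      (μ.restrict {y | q y ≤ s}) := ((measurable_const.div hq_meas).log).aemeasurable
  rw [lintegral_eq_lintegral_meas_lt _ hnn hmble]
  have key : ∀ t ∈ Ioi (0:ℝ),
      (μ.restrict {y | q y ≤ s}) {x | t < Real.log (r * s / q x)}
        ≤ ENNReal.ofReal (C * (r * s) ^ κ * Real.exp (-(κ * t))) := by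
    intro t ht
    rw [Measure.restrict_apply' hS]
    have hvpos : 0 < r * s * Real.exp (-t) := by positivity
    have hrw : C * (r * s) ^ κ * Real.exp (-(κ * t))
        = C * (r * s * Real.exp (-t)) ^ κ := by
      rw [Real.mul_rpow hrs.le (Real.exp_pos _).le]
      rw [← Real.exp_log (Real.exp_pos (-t)), ← Real.exp_mul, Real.log_exp]
      ring_nf
    rw [hrw]
    by_cases htr : t ≤ Real.log r
    · have hsle : s ≤ r * s * Real.exp (-t) := by
        have : Real.exp t ≤ r := by
          calc Real.exp t ≤ Real.exp (Real.log r) := Real.exp_le_exp.2 htr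
          _ = r := Real.exp_log (by linarith)
        have h1 : r⁻¹ ≤ Real.exp (-t) := by
          rw [Real.exp_neg]
          exact inv_anti₀ (Real.exp_pos t) this
        calc s = r * s * r⁻¹ := by field_simp
        _ ≤ r * s * Real.exp (-t) := by
            exact mul_le_mul_of_nonneg_left h1 hrs.le
      calc μ ({x | t < Real.log (r * s / q x)} ∩ {y | q y ≤ s})
          ≤ μ {y | q y ≤ s} := measure_mono inter_subset_right
        _ ≤ ENNReal.ofReal (C * s ^ κ) := hm s hs hst
        _ ≤ ENNReal.ofReal (C * (r * s * Real.exp (-t)) ^ κ) := by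
            apply ENNReal.ofReal_le_ofReal
            have := Real.rpow_le_rpow hs.le hsle hκ0.le
            nlinarith
    · push_neg at htr
      have hvlt : r * s * Real.exp (-t) ≤ s := by
        have : Real.exp (-t) ≤ r⁻¹ := by
          rw [Real.exp_neg]
          apply inv_anti₀ (by linarith)
          calc r = Real.exp (Real.log r) := (Real.exp_log (by linarith)).symm
          _ ≤ Real.exp t := Real.exp_le_exp.2 htr.le
        calc r * s * Real.exp (-t) ≤ r * s * r⁻¹ :=
            mul_le_mul_of_nonneg_left this hrs.le
        _ = s := by field_simp
      have hsub : {x | t < Real.log (r * s / q x)} ∩ {y | q y ≤ s}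
          ⊆ {x | q x ≤ r * s * Real.exp (-t)} := by
        rintro x ⟨hx1, _⟩
        rcases eq_or_lt_of_le (hq_nonneg x) with h0 | h0
        · exact le_of_eq_of_le (h0.symm ▸ rfl) hvpos.le
        · have hdiv : 0 < r * s / q x := by positivity
          have hlt : Real.exp t < r * s / q x := (Real.lt_log_iff_exp_lt hdiv).1 hx1
          have h2 : Real.exp t * q x ≤ r * s := ((lt_div_iff₀ h0).1 hlt).le
          calc q x = Real.exp t * q x * Real.exp (-t) := by
                rw [mul_comm (Real.exp t), mul_assoc, ← Real.exp_add]; simp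
            _ ≤ r * s * Real.exp (-t) :=
                mul_le_mul_of_nonneg_right h2 (Real.exp_pos _).le
      calc μ _ ≤ μ {x | q x ≤ r * s * Real.exp (-t)} := measure_mono hsub
        _ ≤ ENNReal.ofReal (C * (r * s * Real.exp (-t)) ^ κ) :=
            hm _ hvpos (le_trans hvlt hst)
  calc ∫⁻ t in Ioi 0, (μ.restrict {y | q y ≤ s}) {x | t < Real.log (r * s / q x)}
      ≤ ∫⁻ t in Ioi 0, ENNReal.ofReal (C * (r * s) ^ κ * Real.exp (-(κ * t))) :=
        setLIntegral_mono (by fun_prop) key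
    _ = ENNReal.ofReal (∫ t in Ioi 0, C * (r * s) ^ κ * Real.exp (-(κ * t))) := by
        rw [ofReal_integral_eq_lintegral_ofReal]
        · have : (fun t => C * (r*s)^κ * Real.exp (-(κ * t)))
              = fun t => C * (r*s)^κ * Real.exp (-κ * t) := by
            funext t; ring_nf
          rw [this]
          exact (exp_neg_integrableOn_Ioi 0 hκ0).const_mul _
        · filter_upwards with t
          positivity
    _ = ENNReal.ofReal (C * (r * s) ^ κ * κ⁻¹) := by
        congr 1
        rw [MeasureTheory.integral_const_mul]
        have : ∫ t in Ioi (0:ℝ), Real.exp (-(κ * t)) = κ⁻¹ := by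
          have h := integral_comp_mul_left_Ioi (fun u => Real.exp (-u)) 0 hκ0
          simp only [mul_zero, smul_eq_mul] at h
          rw [h, integral_exp_neg_Ioi]
          simp
        rw [this]

/-- If `q ≥ 0` is bounded measurable on a finite measure space with sublevel-set bound
`μ{q ≤ t} ≤ C t^κ` for small `t`, and `χ` is a smooth cutoff identically `1` on `[0,1]`
supported in `(-1/2,2)` with values in `[0,1]`, then
`∫ log(q + α χ(q/α)) dμ = ∫ log q dμ + O(α^κ)` as `α → 0`. -/
theorem stmt2 {X : Type*} [MeasurableSpace X] (μ : Measure X) [IsFiniteMeasure μ]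
    (q : X → ℝ) (hq_meas : Measurable q) (hq_nonneg : ∀ x, 0 ≤ q x)
    (B : ℝ) (hq_bdd : ∀ x, q x ≤ B)
    (κ C t₀ : ℝ) (hκ : κ ∈ Set.Ioc (0:ℝ) 1) (hC : 0 < C) (ht₀ : 0 < t₀)
    (hm : ∀ t : ℝ, 0 < t → t ≤ t₀ →
      μ {x | q x ≤ t} ≤ ENNReal.ofReal (C * t ^ κ))
    (χ : ℝ → ℝ) (hχ_smooth : ContDiff ℝ (⊤ : ℕ∞) χ)
    (hχ_range : ∀ s, χ s ∈ Set.Icc (0:ℝ) 1)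
    (hχ_supp : Function.support χ ⊆ Set.Ioo (-(1/2) : ℝ) 2)
    (hχ_one : ∀ s ∈ Set.Icc (0:ℝ) 1, χ s = 1) :
    ∃ C' α₀ : ℝ, 0 < C' ∧ 0 < α₀ ∧ ∀ α : ℝ, 0 < α → α ≤ α₀ →
      |(∫ x, Real.log (q x + α * χ (q x / α)) ∂μ) - ∫ x, Real.log (q x) ∂μ|
        ≤ C' * α ^ κ := by
  obtain ⟨hκ0, hκ1⟩ := hκ
  -- q > 0 a.e.
  have hq0 : μ {x | q x = 0} = 0 := by
    have hle : ∀ᶠ t in nhdsWithin (0:ℝ) (Set.Ioi 0),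
        μ {x | q x = 0} ≤ ENNReal.ofReal (C * t ^ κ) := by
      filter_upwards [Ioc_mem_nhdsGT_of_mem ⟨le_refl (0:ℝ), ht₀⟩] with t ht
      exact le_trans (measure_mono (fun x hx => le_trans (le_of_eq hx) ht.1.le))
        (hm t ht.1 ht.2)
    have htend : Filter.Tendsto (fun t : ℝ => ENNReal.ofReal (C * t ^ κ))
        (nhdsWithin (0:ℝ) (Set.Ioi 0)) (nhds 0) := by
      have h1 : ContinuousAt (fun t : ℝ => ENNReal.ofReal (C * t ^ κ)) 0 :=
        ENNReal.continuous_ofReal.continuousAt.comp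
          (continuousAt_const.mul (Real.continuousAt_rpow_const 0 κ (Or.inr hκ0.le)))
      have := h1.continuousWithinAt (s := Set.Ioi 0)
      simpa [ContinuousWithinAt, Real.zero_rpow hκ0.ne'] using this
    have := ge_of_tendsto htend hle
    simpa using this
  have hq_pos : ∀ᵐ x ∂μ, 0 < q x := by
    rw [ae_iff]
    convert hq0 using 2
    ext x
    simp only [Set.mem_setOf_eq, not_lt]
    exact ⟨fun h => le_antisymm h (hq_nonneg x), fun h => le_of_eq h⟩
  -- integrability of log q
  set s₁ : ℝ := min t₀ 1 with hs₁def
  have hs₁ : 0 < s₁ := lt_min ht₀ one_pos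
  have hs₁t₀ : s₁ ≤ t₀ := min_le_left _ _
  have hs₁1 : s₁ ≤ 1 := min_le_right _ _
  set B' : ℝ := max B 1 with hB'def
  have hB'1 : 1 ≤ B' := le_max_right _ _
  set r₁ : ℝ := (B' + 1) / s₁ with hr₁def
  have hr₁ : 1 ≤ r₁ := by
    rw [le_div_iff₀ hs₁]
    nlinarith
  have hr₁s₁ : r₁ * s₁ = B' + 1 := by
    rw [hr₁def]; field_simp
  set K : ℝ := |Real.log (r₁ * s₁)| + |Real.log s₁| + |Real.log B'| with hKdef
  have hK0 : 0 ≤ K := by positivity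
  have hptwise : ∀ x, |Real.log (q x)| ≤
      K + Set.indicator {y | q y ≤ s₁} (fun y => Real.log (r₁ * s₁ / q y)) x := by
    intro x
    rcases eq_or_lt_of_le (hq_nonneg x) with h0 | h0
    · have hin : x ∈ {y | q y ≤ s₁} := by
        show q x ≤ s₁; rw [← h0]; exact hs₁.le
      rw [Set.indicator_of_mem hin, ← h0]
      simp [hK0]
    · by_cases hx : q x ≤ s₁
      · rw [Set.indicator_of_mem (show x ∈ {y | q y ≤ s₁} from hx)]
        have hlog : Real.log (r₁ * s₁ / q x) = Real.log (r₁ * s₁) - Real.log (q x) :=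
          Real.log_div (by positivity) h0.ne'
        have h1 : Real.log (q x) ≤ 0 := by
          calc Real.log (q x) ≤ Real.log s₁ := Real.log_le_log h0 hx
          _ ≤ Real.log 1 := Real.log_le_log hs₁ hs₁1
          _ = 0 := Real.log_one
        rw [abs_of_nonpos h1, hlog]
        have := neg_abs_le (Real.log (r₁ * s₁))
        have := abs_nonneg (Real.log s₁)
        have := abs_nonneg (Real.log B')
        simp only [hKdef]
        linarith
      · push_neg at hx
        rw [Set.indicator_of_notMem (by simpa using hx.not_ge)]
        have h1 : Real.log s₁ ≤ Real.log (q x) := Real.log_le_log hs₁ hx.le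
        have h2 : Real.log (q x) ≤ Real.log B' :=
          Real.log_le_log h0 (le_trans (hq_bdd x) (le_max_left _ _))
        have := neg_abs_le (Real.log s₁)
        have := le_abs_self (Real.log B')
        have := abs_nonneg (Real.log (r₁ * s₁))
        have := abs_nonneg (Real.log s₁)
        have := abs_nonneg (Real.log B')
        rw [abs_le]
        constructor <;> [skip; skip] <;> simp only [hKdef] <;> linarith
  have hint_logq : Integrable (fun x => Real.log (q x)) μ := by
    refine ⟨hq_meas.log.aestronglyMeasurable, ?_⟩
    rw [hasFiniteIntegral_iff_norm]
    calc ∫⁻ x, ENNReal.ofReal ‖Real.log (q x)‖ ∂μ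
        ≤ ∫⁻ x, (ENNReal.ofReal K + ENNReal.ofReal
            (Set.indicator {y | q y ≤ s₁} (fun y => Real.log (r₁ * s₁ / q y)) x)) ∂μ := by
          apply lintegral_mono
          intro x
          calc ENNReal.ofReal ‖Real.log (q x)‖
              ≤ ENNReal.ofReal (K + Set.indicator {y | q y ≤ s₁}
                  (fun y => Real.log (r₁ * s₁ / q y)) x) :=
                ENNReal.ofReal_le_ofReal (by rw [Real.norm_eq_abs]; exact hptwise x)
            _ ≤ _ := ENNReal.ofReal_add_le
      _ = ENNReal.ofReal K * μ Set.univ + ∫⁻ x, ENNReal.ofReal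
            (Set.indicator {y | q y ≤ s₁} (fun y => Real.log (r₁ * s₁ / q y)) x) ∂μ := by
          rw [lintegral_add_left measurable_const, lintegral_const]
      _ ≤ ENNReal.ofReal K * μ Set.univ + ENNReal.ofReal (C * (r₁ * s₁) ^ κ * κ⁻¹) := by
          gcongr
          exact key_lintegral μ q hq_meas hq_nonneg κ C t₀ hκ0 hC ht₀ hm s₁ r₁ hs₁ hs₁t₀ hr₁
      _ < ⊤ := by
          apply ENNReal.add_lt_top.2
          exact ⟨ENNReal.mul_lt_top ENNReal.ofReal_lt_top (measure_lt_top μ _),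
            ENNReal.ofReal_lt_top⟩
  -- main estimate
  refine ⟨C * 3 ^ κ * κ⁻¹, t₀ / 2, by positivity, by linarith, ?_⟩
  intro α hα hα₀
  have hχ0 : ∀ s, 0 ≤ χ s := fun s => (hχ_range s).1
  have hχle1 : ∀ s, χ s ≤ 1 := fun s => (hχ_range s).2
  set φ : X → ℝ := fun x => q x + α * χ (q x / α) with hφdef
  have hφ_meas : Measurable φ :=
    hq_meas.add (measurable_const.mul
      (hχ_smooth.continuous.measurable.comp (hq_meas.div_const α)))
  have hφ_lb : ∀ x, α ≤ φ x := by
    intro x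
    by_cases hx : q x ≤ α
    · have h1 : χ (q x / α) = 1 := hχ_one _ ⟨div_nonneg (hq_nonneg x) hα.le,
        (div_le_one hα).2 hx⟩
      simp only [hφdef, h1, mul_one]
      linarith [hq_nonneg x]
    · push_neg at hx
      have := mul_nonneg hα.le (hχ0 (q x / α))
      simp only [hφdef]; linarith
  have hφ_ub : ∀ x, φ x ≤ B + α := by
    intro x
    have := mul_le_mul_of_nonneg_left (hχle1 (q x / α)) hα.le
    simp only [hφdef]; linarith [hq_bdd x]
  have hφ_pos : ∀ x, 0 < φ x := fun x => lt_of_lt_of_le hα (hφ_lb x)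
  have hint_logφ : Integrable (fun x => Real.log (φ x)) μ := by
    refine Integrable.mono' (integrable_const (max |Real.log α| |Real.log (B + α)|))
      (hφ_meas.log.aestronglyMeasurable) ?_
    filter_upwards with x
    rw [Real.norm_eq_abs, abs_le]
    constructor
    · have h1 : Real.log α ≤ Real.log (φ x) := Real.log_le_log hα (hφ_lb x)
      have := neg_abs_le (Real.log α)
      have := le_max_left |Real.log α| |Real.log (B + α)|
      linarith
    · have h1 : Real.log (φ x) ≤ Real.log (B + α) :=
        Real.log_le_log (hφ_pos x) (hφ_ub x)
      have := le_abs_self (Real.log (B + α))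
      have := le_max_right |Real.log α| |Real.log (B + α)|
      linarith
  have hdiff : ∀ᵐ x ∂μ, 0 ≤ Real.log (φ x) - Real.log (q x) ∧
      Real.log (φ x) - Real.log (q x) ≤
        Set.indicator {y | q y ≤ 2 * α} (fun y => Real.log ((3/2) * (2 * α) / q y)) x := by
    filter_upwards [hq_pos] with x hx
    by_cases hx2 : q x ≤ 2 * α
    · have hφq : q x ≤ φ x := by
        have := mul_nonneg hα.le (hχ0 (q x / α))
        simp only [hφdef]; linarith
      have hφ3α : φ x ≤ 3 * α := by
        have := mul_le_mul_of_nonneg_left (hχle1 (q x / α)) hα.le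
        simp only [hφdef]; linarith
      constructor
      · have := Real.log_le_log hx hφq
        linarith
      · rw [Set.indicator_of_mem (show x ∈ {y | q y ≤ 2 * α} from hx2)]
        have h32 : (3/2 : ℝ) * (2 * α) = 3 * α := by ring
        rw [h32, Real.log_div (by positivity) hx.ne']
        have := Real.log_le_log (hφ_pos x) hφ3α
        linarith
    · push_neg at hx2
      have hχz : χ (q x / α) = 0 := by
        have hns : q x / α ∉ Set.Ioo (-(1/2) : ℝ) 2 := by
          simp only [Set.mem_Ioo, not_and, not_lt]
          intro _
          rw [le_div_iff₀ hα]
          linarith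
        by_contra h
        exact hns (hχ_supp h)
      have hφq : φ x = q x := by simp [hφdef, hχz]
      rw [hφq, Set.indicator_of_notMem (by simpa using hx2.not_ge)]
      simp
  have h2α : 0 < 2 * α := by linarith
  have h2αt₀ : 2 * α ≤ t₀ := by linarith
  have hkey := key_lintegral μ q hq_meas hq_nonneg κ C t₀ hκ0 hC ht₀ hm
    (2 * α) (3/2) h2α h2αt₀ (by norm_num)
  rw [← integral_sub hint_logφ hint_logq]
  rw [← Real.norm_eq_abs]
  calc ‖∫ x, (Real.log (φ x) - Real.log (q x)) ∂μ‖
      ≤ (∫⁻ x, ENNReal.ofReal ‖Real.log (φ x) - Real.log (q x)‖ ∂μ).toReal :=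
        norm_integral_le_lintegral_norm _
    _ ≤ C * 3 ^ κ * κ⁻¹ * α ^ κ := by
        have hbound : ∫⁻ x, ENNReal.ofReal ‖Real.log (φ x) - Real.log (q x)‖ ∂μ
            ≤ ENNReal.ofReal (C * ((3/2) * (2 * α)) ^ κ * κ⁻¹) := by
          refine le_trans (lintegral_mono_ae ?_) hkey
          filter_upwards [hdiff] with x ⟨h1, h2⟩
          apply ENNReal.ofReal_le_ofReal
          rw [Real.norm_eq_abs, abs_of_nonneg h1]
          exact h2
        have heq : C * ((3/2) * (2 * α)) ^ κ * κ⁻¹ = C * 3 ^ κ * κ⁻¹ * α ^ κ := by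
          have h32 : (3/2 : ℝ) * (2 * α) = 3 * α := by ring
          rw [h32, Real.mul_rpow (by norm_num) hα.le]
          ring
        rw [← heq]
        exact ENNReal.toReal_le_of_le_ofReal (by positivity) hbound
end

section
/- Let P be an operator on an N-dimensional Hilbert space, z ∈ ℂ, and let 0 ≤ t_1 ≤ ⋯ ≤ t_N be the square roots of the eigenvalues of Q = (P-z)*(P-z), with orthonormal eigenbases e_i of Q and f_i of (P-z)(P-z)* chosen so that (P-z)e_i = t_i f_i and (P-z)* f_i = t_i e_i. Fix α > 0 and let A = max{i : t_i² ≤ α}. With R_+ = Σ_{i≤A} δ_i ⊗ e_i and R_- = Σ_{i≤A} f_i ⊗ δ_i, the block matrix [[P - z, R_-],[R_+, 0]] is invertible with inverse [[Σ_{i>A} t_i^{-1} e_i ⊗ f_i, Σ_{i≤A} e_i ⊗ δ_i],[Σ_{i≤A} δ_i ⊗ f_i, -Σ_{i≤A} t_i δ_i ⊗ δ_i]], provided t_i > 0 for i > A. -/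
/-!
Test the product of the two block matrices on the basis `(f k, 0)`, `(0, δ j)` of
`H × ℂ^A`. For `k < A` the vector `f k` is produced by `R₋ δ_k`, while `E₀ f k = 0`; for
`k ≥ A` it is produced by `(P - z)(t_k⁻¹ e_k)`, and `R₊ e_k = 0`. The vector `(0, δ j)` is
reproduced because `(P - z) e_j = t_j f_j` cancels against `R₋(-t_j δ_j)` and `R₊ e_j = δ_j`.
A right inverse on the finite-dimensional space `H × ℂ^A` is a two-sided inverse.
-/

open ContinuousLinearMap Finset

/-- rank-one operator `(u ⊗ v)(w) = ⟨w, v⟩ u` (inner product linear in `w`). -/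
noncomputable def outerCLM {E F : Type*} [NormedAddCommGroup E] [InnerProductSpace ℂ E]
    [NormedAddCommGroup F] [InnerProductSpace ℂ F] (u : F) (v : E) : E →L[ℂ] F :=
  (innerSL ℂ v).smulRight u

theorem ContinuousLinearMap.eq_id_of_basis_prod {R M₁ M₂ ι κ : Type*} [Semiring R]
    [TopologicalSpace M₁] [AddCommMonoid M₁] [Module R M₁]
    [TopologicalSpace M₂] [AddCommMonoid M₂] [Module R M₂]
    (b : Module.Basis ι R M₁) (c : Module.Basis κ R M₂)
    {L : M₁ × M₂ →L[R] M₁ × M₂}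
    (h₁ : ∀ i, L (b i, 0) = (b i, 0)) (h₂ : ∀ j, L (0, c j) = (0, c j)) :
    L = ContinuousLinearMap.id R _ :=
  coe_injective <| (b.prod c).ext <| by
    rintro (i | j) <;> simp [Module.Basis.prod_apply, h₁, h₂]

theorem ContinuousLinearMap.comp_eq_id_comm {K E : Type*} [Field K] [TopologicalSpace E]
    [AddCommGroup E] [Module K E] [FiniteDimensional K E] {f g : E →L[K] E} :
    f.comp g = ContinuousLinearMap.id K E ↔ g.comp f = ContinuousLinearMap.id K E := by
  rw [← coe_inj, ← coe_inj, toLinearMap_comp, toLinearMap_comp, coe_id]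
  exact LinearMap.comp_eq_id_comm K E

theorem Fin.castLE_cases {A N : ℕ} (h : A ≤ N) {p : Fin N → Prop}
    (hcast : ∀ j : Fin A, p (Fin.castLE h j)) (hle : ∀ k : Fin N, A ≤ (k : ℕ) → p k)
    (k : Fin N) : p k := by
  by_cases hk : (k : ℕ) < A
  · exact hcast ⟨k, hk⟩
  · exact hle k (not_lt.1 hk)

section outerCLM

variable {E F : Type*} [NormedAddCommGroup E] [InnerProductSpace ℂ E]
  [NormedAddCommGroup F] [InnerProductSpace ℂ F]

theorem outerCLM_apply (u : F) (v w : E) : outerCLM u v w = inner ℂ v w • u := rfl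

theorem smul_outerCLM {R : Type*} [Semiring R] [Module R F] [SMulCommClass ℂ R F]
    [ContinuousConstSMul R F] (r : R) (u : F) (v : E) :
    r • outerCLM u v = outerCLM (r • u) v := by
  ext w
  exact (smul_comm (inner ℂ v w) r u).symm

section Family

variable {ι : Type*} {v : ι → E}

theorem sum_outerCLM_apply_of_inner_eq_zero (s : Finset ι) (u : ι → F) {w : E}
    (hw : ∀ i ∈ s, inner ℂ (v i) w = 0) : (∑ i ∈ s, outerCLM (u i) (v i)) w = 0 := by
  simp +contextual [outerCLM_apply, hw]

theorem Orthonormal.sum_outerCLM_apply [DecidableEq ι] (hv : Orthonormal ℂ v) (s : Finset ι)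
    (u : ι → F) (k : ι) :
    (∑ i ∈ s, outerCLM (u i) (v i)) (v k) = if k ∈ s then u k else 0 := by
  simp [outerCLM_apply, orthonormal_iff_ite.1 hv]

end Family

variable {N A : ℕ} (hAN : A ≤ N) {v : Fin N → E}

theorem Orthonormal.sum_outerCLM_castLE_apply_castLE (hv : Orthonormal ℂ v)
    (u : Fin A → F) (k : Fin A) :
    (∑ j : Fin A, outerCLM (u j) (v (Fin.castLE hAN j))) (v (Fin.castLE hAN k)) = u k := by
  simpa using (hv.comp _ (Fin.castLE_injective hAN)).sum_outerCLM_apply univ u k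

theorem Orthonormal.sum_outerCLM_castLE_apply_of_le (hv : Orthonormal ℂ v)
    (u : Fin A → F) {k : Fin N} (hk : A ≤ (k : ℕ)) :
    (∑ j : Fin A, outerCLM (u j) (v (Fin.castLE hAN j))) (v k) = 0 :=
  sum_outerCLM_apply_of_inner_eq_zero _ _ fun j _ =>
    hv.inner_eq_zero (Fin.ne_of_val_ne (by rw [Fin.val_castLE]; omega))

theorem EuclideanSpace.sum_outerCLM_single_apply_single (u : Fin A → F) (k : Fin A) :
    (∑ j, outerCLM (u j) (EuclideanSpace.single j (1 : ℂ))) (EuclideanSpace.single k 1) =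
      u k := by
  classical
  simpa using EuclideanSpace.orthonormal_single.sum_outerCLM_apply univ u k

end outerCLM

theorem stmt6_general (N A : ℕ) (hAN : A ≤ N)
    (H : Type*) [NormedAddCommGroup H] [InnerProductSpace ℂ H]
    [FiniteDimensional ℂ H] (hdim : Module.finrank ℂ H = N)
    (P : H →L[ℂ] H) (z : ℂ)
    (t : Fin N → ℝ)
    (e f : Fin N → H) (he : Orthonormal ℂ e) (hf : Orthonormal ℂ f)
    (hPe : ∀ i, (P - z • ContinuousLinearMap.id ℂ H) (e i) = (t i : ℂ) • f i)
    (ht_pos : ∀ i : Fin N, A ≤ (i : ℕ) → 0 < t i)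
    (Rp : H →L[ℂ] EuclideanSpace ℂ (Fin A))
    (hRp : Rp = ∑ j : Fin A, outerCLM (EuclideanSpace.single j (1:ℂ)) (e (Fin.castLE hAN j)))
    (Rm : EuclideanSpace ℂ (Fin A) →L[ℂ] H)
    (hRm : Rm = ∑ j : Fin A, outerCLM (f (Fin.castLE hAN j)) (EuclideanSpace.single j (1:ℂ)))
    (Pblk : H × EuclideanSpace ℂ (Fin A) →L[ℂ] H × EuclideanSpace ℂ (Fin A))
    (hPblk : ∀ u v, Pblk (u, v) = ((P - z • ContinuousLinearMap.id ℂ H) u + Rm v, Rp u))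
    (E0 : H →L[ℂ] H)
    (hE0 : E0 = ∑ i ∈ Finset.univ.filter (fun i : Fin N => A ≤ (i : ℕ)),
      (t i)⁻¹ • outerCLM (e i) (f i))
    (Ep : EuclideanSpace ℂ (Fin A) →L[ℂ] H)
    (hEp : Ep = ∑ j : Fin A, outerCLM (e (Fin.castLE hAN j)) (EuclideanSpace.single j (1:ℂ)))
    (Em : H →L[ℂ] EuclideanSpace ℂ (Fin A))
    (hEm : Em = ∑ j : Fin A, outerCLM (EuclideanSpace.single j (1:ℂ)) (f (Fin.castLE hAN j)))
    (Emp : EuclideanSpace ℂ (Fin A) →L[ℂ] EuclideanSpace ℂ (Fin A))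
    (hEmp : Emp = -∑ j : Fin A, (t (Fin.castLE hAN j)) •
      outerCLM (EuclideanSpace.single j (1:ℂ)) (EuclideanSpace.single j (1:ℂ)))
    (Eblk : H × EuclideanSpace ℂ (Fin A) →L[ℂ] H × EuclideanSpace ℂ (Fin A))
    (hEblk : ∀ u v, Eblk (u, v) = (E0 u + Ep v, Em u + Emp v)) :
    Pblk.comp Eblk = ContinuousLinearMap.id ℂ _ ∧
    Eblk.comp Pblk = ContinuousLinearMap.id ℂ _ := by
  subst hRp hRm hE0 hEp hEm hEmp
  have hright : Pblk.comp Eblk = ContinuousLinearMap.id ℂ _ := by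
    refine ContinuousLinearMap.eq_id_of_basis_prod
      (basisOfLinearIndependentOfCardEqFinrank' f hf.linearIndependent (by simp [hdim]))
      (EuclideanSpace.basisFun _ ℂ).toBasis
      (Fin.castLE_cases hAN (fun j => ?_) (fun k hk => ?_)) (fun j => ?_)
    all_goals simp only [coe_basisOfLinearIndependentOfCardEqFinrank',
      EuclideanSpace.basisFun_toBasis, PiLp.basisFun_apply, comp_apply, hEblk, hPblk,
      smul_outerCLM, map_zero, add_zero, zero_add, Prod.mk.injEq]
    · simp only [hf.sum_outerCLM_apply, hf.sum_outerCLM_castLE_apply_castLE,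
        EuclideanSpace.sum_outerCLM_single_apply_single, mem_filter, mem_univ, true_and,
        Fin.val_castLE, j.isLt.not_ge, if_false, map_zero, zero_add]
    · simp only [hf.sum_outerCLM_apply, hf.sum_outerCLM_castLE_apply_of_le hAN _ hk,
        he.sum_outerCLM_castLE_apply_of_le hAN _ hk, mem_filter, mem_univ, hk, if_true,
        map_smul_of_tower, hPe, Complex.coe_smul, smul_zero, smul_smul,
        inv_mul_cancel₀ (ht_pos k hk).ne', one_smul, map_zero, add_zero, and_self]
    · simp only [neg_apply, EuclideanSpace.sum_outerCLM_single_apply_single,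
        he.sum_outerCLM_castLE_apply_castLE, map_neg, map_smul_of_tower, hPe, Complex.coe_smul,
        add_neg_cancel, and_self]
  exact ⟨hright, ContinuousLinearMap.comp_eq_id_comm.1 hright⟩

/-- Grushin problem from the singular value decomposition: with singular data
`(P-z)e_i = t_i f_i`, `(P-z)* f_i = t_i e_i`, `A = max{i : t_i² ≤ α}`,
`R₊ = Σ_{i≤A} δ_i ⊗ e_i`, `R₋ = Σ_{i≤A} f_i ⊗ δ_i`, the block matrix
`[[P-z, R₋],[R₊,0]]` is invertible with explicit inverse
`[[Σ_{i>A} t_i⁻¹ e_i ⊗ f_i, Σ_{i≤A} e_i ⊗ δ_i],[Σ_{i≤A} δ_i ⊗ f_i, -Σ_{i≤A} t_i δ_i ⊗ δ_i]]`,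
provided `t_i > 0` for `i > A`. -/
theorem stmt6 (N A : ℕ) (hAN : A ≤ N)
    (H : Type*) [NormedAddCommGroup H] [InnerProductSpace ℂ H]
    [FiniteDimensional ℂ H] [CompleteSpace H] (hdim : Module.finrank ℂ H = N)
    (P : H →L[ℂ] H) (z : ℂ)
    (t : Fin N → ℝ) (ht_nonneg : ∀ i, 0 ≤ t i) (ht_mono : Monotone t)
    (e f : Fin N → H) (he : Orthonormal ℂ e) (hf : Orthonormal ℂ f)
    (hPe : ∀ i, (P - z • ContinuousLinearMap.id ℂ H) (e i) = (t i : ℂ) • f i)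
    (hPf : ∀ i, (ContinuousLinearMap.adjoint (P - z • ContinuousLinearMap.id ℂ H)) (f i)
      = (t i : ℂ) • e i)
    (α : ℝ) (hα : 0 < α)
    (hA : ∀ i : Fin N, (i : ℕ) < A ↔ t i ^ 2 ≤ α)
    (ht_pos : ∀ i : Fin N, A ≤ (i : ℕ) → 0 < t i)
    (Rp : H →L[ℂ] EuclideanSpace ℂ (Fin A))
    (hRp : Rp = ∑ j : Fin A, outerCLM (EuclideanSpace.single j (1:ℂ)) (e (Fin.castLE hAN j)))
    (Rm : EuclideanSpace ℂ (Fin A) →L[ℂ] H)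
    (hRm : Rm = ∑ j : Fin A, outerCLM (f (Fin.castLE hAN j)) (EuclideanSpace.single j (1:ℂ)))
    (Pblk : H × EuclideanSpace ℂ (Fin A) →L[ℂ] H × EuclideanSpace ℂ (Fin A))
    (hPblk : ∀ u v, Pblk (u, v) = ((P - z • ContinuousLinearMap.id ℂ H) u + Rm v, Rp u))
    (E0 : H →L[ℂ] H)
    (hE0 : E0 = ∑ i ∈ Finset.univ.filter (fun i : Fin N => A ≤ (i : ℕ)),
      (t i)⁻¹ • outerCLM (e i) (f i))
    (Ep : EuclideanSpace ℂ (Fin A) →L[ℂ] H)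
    (hEp : Ep = ∑ j : Fin A, outerCLM (e (Fin.castLE hAN j)) (EuclideanSpace.single j (1:ℂ)))
    (Em : H →L[ℂ] EuclideanSpace ℂ (Fin A))
    (hEm : Em = ∑ j : Fin A, outerCLM (EuclideanSpace.single j (1:ℂ)) (f (Fin.castLE hAN j)))
    (Emp : EuclideanSpace ℂ (Fin A) →L[ℂ] EuclideanSpace ℂ (Fin A))
    (hEmp : Emp = -∑ j : Fin A, (t (Fin.castLE hAN j)) •
      outerCLM (EuclideanSpace.single j (1:ℂ)) (EuclideanSpace.single j (1:ℂ)))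
    (Eblk : H × EuclideanSpace ℂ (Fin A) →L[ℂ] H × EuclideanSpace ℂ (Fin A))
    (hEblk : ∀ u v, Eblk (u, v) = (E0 u + Ep v, Em u + Emp v)) :
    Pblk.comp Eblk = ContinuousLinearMap.id ℂ _ ∧
    Eblk.comp Pblk = ContinuousLinearMap.id ℂ _ :=
  stmt6_general N A hAN H hdim P z t e f he hf hPe ht_pos Rp hRp Rm hRm Pblk hPblk E0 hE0 Ep hEp Em
    hEm Emp hEmp Eblk hEblk
end

section
/- With the Grushin data as above and P - z invertible, the smallest singular value of E_{-+} satisfies s_A(E_{-+}) ≥ s_N(P - z), i.e., t_1(E_{-+}) ≥ t_1(P - z), where t_1(B) denotes the smallest eigenvalue of √(B*B). -/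
open ContinuousLinearMap

/-- The smallest singular value `t₁(B) = inf_{‖x‖=1} ‖Bx‖` of an operator `B`. -/
noncomputable def smallestSV {E F : Type*} [NormedAddCommGroup E] [InnerProductSpace ℂ E]
    [NormedAddCommGroup F] [InnerProductSpace ℂ F] (B : E →L[ℂ] F) : ℝ :=
  sInf ((fun x => ‖B x‖) '' {x : E | ‖x‖ = 1})

/-- With the Grushin data, `P - z` invertible, `E₋₊⁻¹ = -R₊(P-z)⁻¹R₋` and
`‖R₊‖, ‖R₋‖ ≤ 1`, the smallest singular value of `E₋₊` is at least that of `P - z`: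
`t₁(E₋₊) ≥ t₁(P - z)`. -/
theorem stmt9 (N A : ℕ) (hA1 : 1 ≤ A) (hN1 : 1 ≤ N)
    (P : EuclideanSpace ℂ (Fin N) →L[ℂ] EuclideanSpace ℂ (Fin N)) (z : ℂ)
    (Pz : EuclideanSpace ℂ (Fin N) →L[ℂ] EuclideanSpace ℂ (Fin N))
    (hPz : Pz = P - z • ContinuousLinearMap.id ℂ _)
    (Pzinv : EuclideanSpace ℂ (Fin N) →L[ℂ] EuclideanSpace ℂ (Fin N))
    (hPzinv₁ : Pz.comp Pzinv = ContinuousLinearMap.id ℂ _)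
    (hPzinv₂ : Pzinv.comp Pz = ContinuousLinearMap.id ℂ _)
    (Rp : EuclideanSpace ℂ (Fin N) →L[ℂ] EuclideanSpace ℂ (Fin A))
    (Rm : EuclideanSpace ℂ (Fin A) →L[ℂ] EuclideanSpace ℂ (Fin N))
    (hRp : ‖Rp‖ ≤ 1) (hRm : ‖Rm‖ ≤ 1)
    (Emp : EuclideanSpace ℂ (Fin A) →L[ℂ] EuclideanSpace ℂ (Fin A))
    (EmpInv : EuclideanSpace ℂ (Fin A) →L[ℂ] EuclideanSpace ℂ (Fin A))
    (hEmpInv₁ : Emp.comp EmpInv = ContinuousLinearMap.id ℂ _)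
    (hEmpInv₂ : EmpInv.comp Emp = ContinuousLinearMap.id ℂ _)
    (hSchur : EmpInv = -(Rp.comp (Pzinv.comp Rm))) :
    smallestSV Emp ≥ smallestSV Pz := by
  classical
  have hA0 : 0 < A := hA1
  set eA : EuclideanSpace ℂ (Fin A) := EuclideanSpace.single ⟨0, hA0⟩ (1 : ℂ) with heA
  have heA1 : ‖eA‖ = 1 := by simp [heA, EuclideanSpace.norm_single]
  have hne : ((fun x => ‖Emp x‖) '' {x : EuclideanSpace ℂ (Fin A) | ‖x‖ = 1}).Nonempty :=
    ⟨‖Emp eA‖, eA, heA1, rfl⟩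
  have hbddP : BddBelow ((fun x => ‖Pz x‖) '' {x : EuclideanSpace ℂ (Fin N) | ‖x‖ = 1}) :=
    ⟨0, by rintro y ⟨x, hx, rfl⟩; positivity⟩
  -- EmpInv ≠ 0
  have hEmpInv_ne : EmpInv ≠ 0 := by
    intro h
    have h2 : EmpInv (Emp eA) = eA := by
      have := congrArg (fun T => T eA) hEmpInv₂; simpa using this
    rw [h] at h2
    simp only [ContinuousLinearMap.zero_apply] at h2
    rw [← h2] at heA1
    simp at heA1
  have hEmpN : 0 < ‖EmpInv‖ := norm_pos_iff.mpr hEmpInv_ne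
  -- (a) smallestSV Emp ≥ ‖EmpInv‖⁻¹
  have ha : ‖EmpInv‖⁻¹ ≤ smallestSV Emp := by
    apply le_csInf hne
    rintro y ⟨x, hx, rfl⟩
    have h2 : EmpInv (Emp x) = x := by
      have := congrArg (fun T => T x) hEmpInv₂; simpa using this
    have h3 : (1 : ℝ) ≤ ‖EmpInv‖ * ‖Emp x‖ := by
      calc (1 : ℝ) = ‖x‖ := hx.symm
        _ = ‖EmpInv (Emp x)‖ := by rw [h2]
        _ ≤ ‖EmpInv‖ * ‖Emp x‖ := EmpInv.le_opNorm _
    have h4 : ‖EmpInv‖ * ‖EmpInv‖⁻¹ = 1 := mul_inv_cancel₀ (ne_of_gt hEmpN)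
    nlinarith [norm_nonneg (Emp x)]
  -- (c) ‖EmpInv‖ ≤ ‖Pzinv‖
  have hc : ‖EmpInv‖ ≤ ‖Pzinv‖ := by
    rw [hSchur, norm_neg]
    have h1 : ‖Rp.comp (Pzinv.comp Rm)‖ ≤ ‖Rp‖ * ‖Pzinv.comp Rm‖ := opNorm_comp_le _ _
    have h2 : ‖Pzinv.comp Rm‖ ≤ ‖Pzinv‖ * ‖Rm‖ := opNorm_comp_le _ _
    nlinarith [norm_nonneg Rp, norm_nonneg Rm, norm_nonneg Pzinv,
      norm_nonneg (Pzinv.comp Rm)]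
  set s : ℝ := smallestSV Pz with hs
  clear_value s
  by_cases hs0 : s ≤ 0
  · have : (0 : ℝ) ≤ ‖EmpInv‖⁻¹ := by positivity
    linarith
  · push_neg at hs0
    have hPb : ‖Pzinv‖ ≤ s⁻¹ := by
      apply Pzinv.opNorm_le_bound (by positivity)
      intro w
      by_cases hw : Pzinv w = 0
      · rw [hw]; simp; positivity
      · have hwpos : 0 < ‖Pzinv w‖ := norm_pos_iff.mpr hw
        have hunit : ‖((‖Pzinv w‖⁻¹ : ℝ) : ℂ) • Pzinv w‖ = 1 := by
          rw [norm_smul, Complex.norm_real, Real.norm_eq_abs, abs_of_nonneg (by positivity)]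
          field_simp
        have hmem : s ≤ ‖Pz (((‖Pzinv w‖⁻¹ : ℝ) : ℂ) • Pzinv w)‖ := by
          rw [hs, smallestSV]
          exact csInf_le hbddP ⟨_, hunit, rfl⟩
        have hPzPzinv : Pz (Pzinv w) = w := by
          have := congrArg (fun T => T w) hPzinv₁; simpa using this
        rw [map_smul, hPzPzinv, norm_smul, Complex.norm_real, Real.norm_eq_abs,
          abs_of_nonneg (by positivity : (0:ℝ) ≤ ‖Pzinv w‖⁻¹)] at hmem
        have h5 : ‖Pzinv w‖ * ‖Pzinv w‖⁻¹ = 1 := mul_inv_cancel₀ (ne_of_gt hwpos)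
        have h6 : s * s⁻¹ = 1 := mul_inv_cancel₀ (ne_of_gt hs0)
        nlinarith [norm_nonneg w]
    have hE : ‖EmpInv‖ ≤ s⁻¹ := hc.trans hPb
    have h6 : s * s⁻¹ = 1 := mul_inv_cancel₀ (ne_of_gt hs0)
    have h7 : ‖EmpInv‖ * ‖EmpInv‖⁻¹ = 1 := mul_inv_cancel₀ (ne_of_gt hEmpN)
    have : s ≤ ‖EmpInv‖⁻¹ := by
      have h8 : (s⁻¹)⁻¹ ≤ ‖EmpInv‖⁻¹ := inv_anti₀ hEmpN hE
      rwa [inv_inv] at h8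
    linarith
end

section
/- Let A, B be n × n complex matrices with B invertible and let A' = A + δG for some matrix G and δ > 0. Then |log|det(A + δG)| - log|det A|| ≤ δ · sup_{τ ∈ [0,δ]} ‖(A + τG)^{-1}‖ · ‖G‖_{tr}, provided A + τG is invertible for all τ ∈ [0, δ]. -/
open Matrix
open scoped ComplexOrder

/-- The trace norm `‖G‖_tr = Tr √(G* G)` of a complex square matrix. -/
noncomputable def traceNorm {n : ℕ} (G : Matrix (Fin n) (Fin n) ℂ) : ℝ :=
  (((Matrix.posSemidef_conjTranspose_mul_self G).1.eigenvectorUnitary.1 *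
    diagonal (((↑) : ℝ → ℂ) ∘ (√·) ∘ (Matrix.posSemidef_conjTranspose_mul_self G).1.eigenvalues) *
    (star (Matrix.posSemidef_conjTranspose_mul_self G).1.eigenvectorUnitary :
      Matrix (Fin n) (Fin n) ℂ)).trace).re

noncomputable def opNorm {n : ℕ} (E : Matrix (Fin n) (Fin n) ℂ) : ℝ :=
  ‖Matrix.toEuclideanCLM (𝕜 := ℂ) E‖

/-!
Along the segment `t ↦ A + tG`, Jacobi's formula gives
`d/dt log|det(A + tG)| = Re Tr((A + tG)⁻¹ G)`. If `(vᵢ)` is an orthonormal eigenbasis of `G* G`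
with eigenvalues `λᵢ`, then `Tr(EG) = ∑ ⟪vᵢ, EGvᵢ⟫` and `‖Gvᵢ‖ = √λᵢ`, so
`|Tr(EG)| ≤ ‖E‖ ∑ √λᵢ = ‖E‖ ‖G‖_tr` (Schatten–Hölder). The mean value inequality then bounds the
increment of `log|det|` over `[0, δ]`; the supremum of `‖(A + tG)⁻¹‖` is finite (and so not the
junk value `0` of an unbounded `⨆`) because it is a continuous function on a compact interval.
-/

open scoped InnerProductSpace

section Jacobi

open Polynomial

variable {𝕜 : Type*} [NontriviallyNormedField 𝕜] {n : Type*} [Fintype n] [DecidableEq n]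

theorem hasDerivAt_det_one_add_smul (N : Matrix n n 𝕜) :
    HasDerivAt (fun s : 𝕜 => (1 + s • N).det) N.trace 0 := by
  have h := (det (1 + (X : 𝕜[X]) • N.map C)).hasDerivAt 0
  rw [derivative_det_one_add_X_smul] at h
  convert h using 2 with s
  simp [eval_det, ← smul_eq_mul_diagonal]

theorem hasDerivAt_det_add_smul {A G : Matrix n n 𝕜} {τ : 𝕜} (h : IsUnit (A + τ • G)) :
    HasDerivAt (fun t : 𝕜 => (A + t • G).det)
      ((A + τ • G).det * ((A + τ • G)⁻¹ * G).trace) τ := by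
  set M := A + τ • G with hM
  have hfactor : ∀ t : 𝕜, A + t • G = M * (1 + (t - τ) • (M⁻¹ * G)) := fun t => by
    rw [Matrix.mul_add, Matrix.mul_one, Matrix.mul_smul, ← Matrix.mul_assoc,
      Matrix.mul_nonsing_inv _ ((isUnit_iff_isUnit_det M).mp h), Matrix.one_mul, sub_smul, hM]
    abel
  have hshift : HasDerivAt (fun t : 𝕜 => (1 + (t - τ) • (M⁻¹ * G)).det) (M⁻¹ * G).trace τ :=
    HasDerivAt.comp_sub_const τ τ (by simpa using hasDerivAt_det_one_add_smul (M⁻¹ * G))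
  simp_rw [hfactor, det_mul]
  exact hshift.const_mul _

end Jacobi

theorem HasDerivAt.log_norm {φ : ℝ → ℂ} {φ' : ℂ} {t : ℝ} (hφ : HasDerivAt φ φ' t)
    (h : φ t ≠ 0) : HasDerivAt (fun s => Real.log ‖φ s‖) (φ' / φ t).re t := by
  have hsq : ‖φ t‖ ^ 2 ≠ 0 := by positivity
  have heq : (fun s => Real.log ‖φ s‖) = fun s => Real.log (‖φ s‖ ^ 2) / 2 := by
    funext s
    rw [Real.log_pow]
    ring
  rw [heq]
  refine ((hφ.norm_sq.log hsq).div_const 2).congr_deriv ?_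
  rw [Complex.div_re, Complex.inner, ← Complex.normSq_eq_norm_sq]
  simp only [Complex.mul_re, Complex.conj_re, Complex.conj_im, mul_neg, sub_neg_eq_add]
  ring

theorem hasDerivAt_log_norm_det_add_smul {n : Type*} [Fintype n] [DecidableEq n]
    {A G : Matrix n n ℂ} {τ : ℝ} (h : IsUnit (A + (τ : ℂ) • G)) :
    HasDerivAt (fun t : ℝ => Real.log ‖(A + (t : ℂ) • G).det‖)
      ((A + (τ : ℂ) • G)⁻¹ * G).trace.re τ := by
  have hdet : (A + (τ : ℂ) • G).det ≠ 0 := ((isUnit_iff_isUnit_det _).mp h).ne_zero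
  have hlog := (hasDerivAt_det_add_smul h).comp_ofReal.log_norm hdet
  rwa [mul_div_cancel_left₀ _ hdet] at hlog

section TraceNorm

variable {𝕜 : Type*} [RCLike 𝕜] {n ι : Type*} [Fintype n] [DecidableEq n] [Fintype ι]

theorem Matrix.trace_eq_sum_inner_toEuclideanCLM (M : Matrix n n 𝕜)
    (b : OrthonormalBasis ι 𝕜 (EuclideanSpace 𝕜 n)) :
    M.trace = ∑ i, ⟪b i, toEuclideanCLM (𝕜 := 𝕜) M (b i)⟫_𝕜 := by
  rw [← Matrix.trace_toLin_eq M (EuclideanSpace.basisFun n 𝕜).toBasis]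
  exact LinearMap.trace_eq_sum_inner _ b

theorem Matrix.norm_toEuclideanCLM_apply_sq (G : Matrix n n 𝕜) (x : EuclideanSpace 𝕜 n) :
    ‖toEuclideanCLM (𝕜 := 𝕜) G x‖ ^ 2 =
      RCLike.re ⟪x, toEuclideanCLM (𝕜 := 𝕜) (Gᴴ * G) x⟫_𝕜 := by
  rw [map_mul, ← star_eq_conjTranspose, map_star, ContinuousLinearMap.star_eq_adjoint,
    mul_apply_eq_comp, ContinuousLinearMap.adjoint_inner_right, inner_self_eq_norm_sq]

theorem Matrix.IsHermitian.trace_conj_diagonal {H : Matrix n n 𝕜} (hH : H.IsHermitian)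
    (d : n → 𝕜) :
    (hH.eigenvectorUnitary.1 * diagonal d * star hH.eigenvectorUnitary.1).trace = ∑ i, d i := by
  rw [trace_mul_cycle, Unitary.coe_star_mul_self, Matrix.one_mul, trace_diagonal]

theorem Matrix.norm_toEuclideanCLM_eigenvectorBasis_conjTranspose_mul_self (G : Matrix n n 𝕜)
    (i : n) :
    ‖toEuclideanCLM (𝕜 := 𝕜) G ((posSemidef_conjTranspose_mul_self G).1.eigenvectorBasis i)‖ =
      √((posSemidef_conjTranspose_mul_self G).1.eigenvalues i) := by
  set hH := (posSemidef_conjTranspose_mul_self G).1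
  have heig : toEuclideanCLM (𝕜 := 𝕜) (Gᴴ * G) (hH.eigenvectorBasis i) =
      (hH.eigenvalues i : 𝕜) • hH.eigenvectorBasis i := by
    refine WithLp.ofLp_injective 2 ?_
    rw [ofLp_toEuclideanCLM, WithLp.ofLp_smul, hH.mulVec_eigenvectorBasis,
      RCLike.real_smul_eq_coe_smul (K := 𝕜)]
  rw [← Real.sqrt_sq (norm_nonneg _), norm_toEuclideanCLM_apply_sq, heig, inner_smul_right,
    inner_self_eq_norm_sq_to_K, hH.eigenvectorBasis.orthonormal.1 i]
  simp

end TraceNorm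

variable {n : ℕ}

theorem traceNorm_eq_sum_sqrt_eigenvalues (G : Matrix (Fin n) (Fin n) ℂ) :
    traceNorm G = ∑ i, √((posSemidef_conjTranspose_mul_self G).1.eigenvalues i) := by
  rw [traceNorm, IsHermitian.trace_conj_diagonal]
  simp

theorem traceNorm_nonneg (G : Matrix (Fin n) (Fin n) ℂ) : 0 ≤ traceNorm G :=
  traceNorm_eq_sum_sqrt_eigenvalues G ▸ Finset.sum_nonneg fun _ _ => Real.sqrt_nonneg _

theorem norm_trace_mul_le (E G : Matrix (Fin n) (Fin n) ℂ) :
    ‖(E * G).trace‖ ≤ opNorm E * traceNorm G := by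
  set hH := (posSemidef_conjTranspose_mul_self G).1
  set b := hH.eigenvectorBasis
  rw [trace_eq_sum_inner_toEuclideanCLM _ b, traceNorm_eq_sum_sqrt_eigenvalues, Finset.mul_sum]
  refine (norm_sum_le _ _).trans (Finset.sum_le_sum fun i _ => ?_)
  calc ‖⟪b i, toEuclideanCLM (𝕜 := ℂ) (E * G) (b i)⟫_ℂ‖
      ≤ ‖b i‖ * ‖toEuclideanCLM (𝕜 := ℂ) (E * G) (b i)‖ := norm_inner_le_norm _ _
    _ = ‖toEuclideanCLM (𝕜 := ℂ) E (toEuclideanCLM (𝕜 := ℂ) G (b i))‖ := by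
        rw [b.orthonormal.1 i, one_mul, map_mul, mul_apply_eq_comp]
    _ ≤ opNorm E * ‖toEuclideanCLM (𝕜 := ℂ) G (b i)‖ :=
        (toEuclideanCLM (𝕜 := ℂ) E).le_opNorm _
    _ = opNorm E * √(hH.eigenvalues i) := by
        rw [norm_toEuclideanCLM_eigenvectorBasis_conjTranspose_mul_self]

open scoped Matrix.Norms.L2Operator in
theorem continuous_opNorm : Continuous (opNorm : Matrix (Fin n) (Fin n) ℂ → ℝ) :=
  continuous_norm

theorem bddAbove_opNorm_inv_add_smul {A G : Matrix (Fin n) (Fin n) ℂ} {a b : ℝ}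
    (h : ∀ τ ∈ Set.Icc a b, IsUnit (A + (τ : ℂ) • G)) :
    BddAbove (Set.range fun τ : Set.Icc a b => opNorm (A + (τ.1 : ℂ) • G)⁻¹) := by
  have hcont : ContinuousOn (fun τ : ℝ => opNorm (A + (τ : ℂ) • G)⁻¹) (Set.Icc a b) := by
    intro τ hτ
    have hdet : IsUnit (A + (τ : ℂ) • G).det := (isUnit_iff_isUnit_det _).mp (h τ hτ)
    have hinv := continuousAt_matrix_inv (A + (τ : ℂ) • G)
      (NormedRing.inverse_continuousAt hdet.unit)
    have hpath : Continuous fun t : ℝ => A + (t : ℂ) • G := by fun_prop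
    exact (continuous_opNorm.continuousAt.comp
      (hinv.comp (f := fun t : ℝ => A + (t : ℂ) • G) hpath.continuousAt)).continuousWithinAt
  simpa only [Set.image_eq_range] using isCompact_Icc.bddAbove_image hcont

/-- If `A + τG` is invertible for all `τ ∈ [0,δ]`, then
`|log|det(A + δG)| - log|det A|| ≤ δ · sup_{τ∈[0,δ]} ‖(A + τG)⁻¹‖ · ‖G‖_tr`. -/
theorem stmt17 (n : ℕ) (A G : Matrix (Fin n) (Fin n) ℂ) (δ : ℝ) (hδ : 0 < δ)
    (hinv : ∀ τ : ℝ, τ ∈ Set.Icc 0 δ → IsUnit (A + (τ : ℂ) • G)) :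
    |Real.log (‖(A + (δ : ℂ) • G).det‖) - Real.log (‖A.det‖)|
      ≤ δ * (⨆ τ : Set.Icc (0:ℝ) δ, opNorm (A + (τ.1 : ℂ) • G)⁻¹) * traceNorm G := by
  set S := ⨆ τ : Set.Icc (0:ℝ) δ, opNorm (A + (τ.1 : ℂ) • G)⁻¹
  have hderiv : ∀ t ∈ Set.Icc 0 δ,
      HasDerivWithinAt (fun t : ℝ => Real.log ‖(A + (t : ℂ) • G).det‖)
        ((A + (t : ℂ) • G)⁻¹ * G).trace.re (Set.Icc 0 δ) t := fun t ht =>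
    (hasDerivAt_log_norm_det_add_smul (hinv t ht)).hasDerivWithinAt
  have hbound : ∀ t ∈ Set.Ico 0 δ, ‖((A + (t : ℂ) • G)⁻¹ * G).trace.re‖ ≤ S * traceNorm G :=
    fun t ht => calc
      ‖((A + (t : ℂ) • G)⁻¹ * G).trace.re‖ ≤ ‖((A + (t : ℂ) • G)⁻¹ * G).trace‖ :=
        Complex.abs_re_le_norm _
      _ ≤ opNorm (A + (t : ℂ) • G)⁻¹ * traceNorm G := norm_trace_mul_le _ _
      _ ≤ S * traceNorm G := mul_le_mul_of_nonneg_right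
        (le_ciSup (bddAbove_opNorm_inv_add_smul hinv) ⟨t, Set.Ico_subset_Icc_self ht⟩)
        (traceNorm_nonneg G)
  have hmvt := norm_image_sub_le_of_norm_deriv_le_segment' hderiv hbound δ
    (Set.right_mem_Icc.mpr hδ.le)
  simp only [Complex.ofReal_zero, zero_smul, add_zero, sub_zero, Real.norm_eq_abs] at hmvt
  exact hmvt.trans_eq (by ring)
end

section
/- Let f : X → ℂ be a measurable function on a finite measure space satisfying μ({x : |f(x) - z|² ≤ t}) ≤ C t^κ for all t ∈ (0, t_0], uniformly in z ∈ ℂ, for some κ ∈ (0,1]. Then for every z ∈ ℂ, the function x ↦ log|f(x) - z| is integrable on X, and ∫_X |log|f(x) - z|| dμ(x) is bounded uniformly for z in any compact subset of ℂ. -/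
/-!
Write `log |f - z| = log⁺ |f - z| - log⁺ |f - z|⁻¹`. The positive part is at most
`log⁺ (|B| + |z|)`, which is bounded on compact sets. For the negative part, the layer-cake
formula expresses `∫ log⁺ |f - z|⁻¹` through the measures of the sublevel sets
`{|f - z| ≤ e^{-t}}`, `t > 0`. Since `μ X < ∞`, the hypothesis extends from `t ≤ t₀` to all `t`
with a larger constant `C'`, so these measures are at most `C' e^{-2κt}`, and the negative part
has integral at most `C' / (2κ)` for every `z`.
-/

open MeasureTheory

open Real Set

section

variable {X : Type*} [MeasurableSpace X] {μ : Measure X}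

theorem measure_le_ofReal_max_mul_rpow [IsFiniteMeasure μ] {s : Set X} {κ C t₀ t : ℝ}
    (hκ : 0 ≤ κ) (ht₀ : 0 < t₀) (ht : 0 < t) (h : t ≤ t₀ → μ s ≤ ENNReal.ofReal (C * t ^ κ)) :
    μ s ≤ ENNReal.ofReal (max C (μ.real univ / t₀ ^ κ) * t ^ κ) := by
  rcases le_or_gt t t₀ with htt₀ | ht₀t
  · exact (h htt₀).trans <| ENNReal.ofReal_le_ofReal <|
      mul_le_mul_of_nonneg_right (le_max_left _ _) (rpow_nonneg ht.le κ)
  · have ht₀κ : 0 < t₀ ^ κ := rpow_pos_of_pos ht₀ κ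
    calc μ s ≤ μ univ := measure_mono (subset_univ s)
      _ = ENNReal.ofReal (μ.real univ / t₀ ^ κ * t₀ ^ κ) := by
        rw [div_mul_cancel₀ _ ht₀κ.ne', ofReal_measureReal]
      _ ≤ ENNReal.ofReal (max C (μ.real univ / t₀ ^ κ) * t ^ κ) :=
        ENNReal.ofReal_le_ofReal <| mul_le_mul (le_max_right _ _)
          (rpow_le_rpow ht₀.le ht₀t.le hκ) ht₀κ.le
          ((div_nonneg measureReal_nonneg ht₀κ.le).trans (le_max_right _ _))

theorem abs_log_eq_posLog_add_posLog_inv (x : ℝ) : |log x| = log⁺ x + log⁺ x⁻¹ := by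
  rw [posLog_apply, posLog_apply, log_inv]
  rcases le_total 0 (log x) with h | h
  · simp [abs_of_nonneg h, h]
  · simp [abs_of_nonpos h, h]

variable {E : Type*} [NormedAddCommGroup E] {g : X → E} {a C : ℝ}

theorem lintegral_posLog_inv_norm_le (hg : AEStronglyMeasurable g μ) (ha : 0 < a)
    (hC : 0 ≤ C) (h : ∀ r > 0, μ {x | ‖g x‖ ≤ r} ≤ ENNReal.ofReal (C * r ^ a)) :
    ∫⁻ x, ENNReal.ofReal (log⁺ ‖g x‖⁻¹) ∂μ ≤ ENNReal.ofReal (C / a) := by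
  have hlevel : ∀ t > 0, μ {x | t < log⁺ ‖g x‖⁻¹} ≤ ENNReal.ofReal (C * exp (-a * t)) := by
    intro t ht
    refine (measure_mono fun x (hx : t < log⁺ ‖g x‖⁻¹) => ?_).trans
      ((h _ (exp_pos (-t))).trans_eq (by rw [← exp_mul]; ring_nf))
    have hlog : log ‖g x‖ < -t := by
      rw [posLog_apply, lt_max_iff, log_inv] at hx
      rcases hx with hx | hx <;> linarith
    rcases (norm_nonneg (g x)).eq_or_lt with h0 | h0
    · show ‖g x‖ ≤ _
      rw [← h0]
      exact (exp_pos _).le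
    · exact ((log_lt_iff_lt_exp h0).mp hlog).le
  have hexp : IntegrableOn (fun t => C * exp (-a * t)) (Ioi 0) :=
    (exp_neg_integrableOn_Ioi 0 ha).const_mul C
  calc ∫⁻ x, ENNReal.ofReal (log⁺ ‖g x‖⁻¹) ∂μ
      = ∫⁻ t in Ioi 0, μ {x | t < log⁺ ‖g x‖⁻¹} :=
        lintegral_eq_lintegral_meas_lt μ (ae_of_all _ fun _ => posLog_nonneg)
          (continuous_posLog.measurable.comp_aemeasurable hg.norm.aemeasurable.inv)
    _ ≤ ∫⁻ t in Ioi 0, ENNReal.ofReal (C * exp (-a * t)) :=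
        setLIntegral_mono (by fun_prop) hlevel
    _ = ENNReal.ofReal (C / a) := by
        rw [← ofReal_integral_eq_lintegral_ofReal hexp (ae_of_all _ fun t => by positivity),
          integral_const_mul, integral_exp_mul_Ioi (neg_neg_of_pos ha), mul_zero, exp_zero,
          neg_div_neg_eq, mul_one_div]

theorem integrable_posLog_inv_norm_of_measure_le (hg : AEStronglyMeasurable g μ) (ha : 0 < a)
    (hC : 0 ≤ C) (h : ∀ r > 0, μ {x | ‖g x‖ ≤ r} ≤ ENNReal.ofReal (C * r ^ a)) :
    Integrable (fun x => log⁺ ‖g x‖⁻¹) μ := by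
  refine ⟨(continuous_posLog.measurable.comp_aemeasurable
    hg.norm.aemeasurable.inv).aestronglyMeasurable, ?_⟩
  rw [hasFiniteIntegral_iff_ofReal (ae_of_all _ fun _ => posLog_nonneg)]
  exact (lintegral_posLog_inv_norm_le hg ha hC h).trans_lt ENNReal.ofReal_lt_top

theorem integral_posLog_inv_norm_le (hg : AEStronglyMeasurable g μ) (ha : 0 < a)
    (hC : 0 ≤ C) (h : ∀ r > 0, μ {x | ‖g x‖ ≤ r} ≤ ENNReal.ofReal (C * r ^ a)) :
    ∫ x, log⁺ ‖g x‖⁻¹ ∂μ ≤ C / a := by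
  rw [integral_eq_lintegral_of_nonneg_ae (ae_of_all _ fun _ => posLog_nonneg)
    (integrable_posLog_inv_norm_of_measure_le hg ha hC h).aestronglyMeasurable]
  exact ENNReal.toReal_le_of_le_ofReal (div_nonneg hC ha.le)
    (lintegral_posLog_inv_norm_le hg ha hC h)

variable [IsFiniteMeasure μ] {R : ℝ}

theorem integrable_posLog_norm_of_ae_le (hg : AEStronglyMeasurable g μ)
    (hgR : ∀ᵐ x ∂μ, ‖g x‖ ≤ R) : Integrable (fun x => log⁺ ‖g x‖) μ :=
  .of_bound (continuous_posLog.comp_aestronglyMeasurable hg.norm) (log⁺ R) <|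
    hgR.mono fun x hx => by
      rw [norm_of_nonneg posLog_nonneg]
      exact posLog_le_posLog (norm_nonneg _) hx

theorem integral_posLog_norm_le (hgR : ∀ᵐ x ∂μ, ‖g x‖ ≤ R) :
    ∫ x, log⁺ ‖g x‖ ∂μ ≤ log⁺ R * μ.real univ := by
  rw [mul_comm, ← smul_eq_mul, ← integral_const]
  exact integral_mono_of_nonneg (ae_of_all _ fun _ => posLog_nonneg) (integrable_const _)
    (hgR.mono fun x hx => posLog_le_posLog (norm_nonneg _) hx)

theorem integrable_log_norm_of_measure_le (hg : AEStronglyMeasurable g μ)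
    (hgR : ∀ᵐ x ∂μ, ‖g x‖ ≤ R) (ha : 0 < a) (hC : 0 ≤ C)
    (h : ∀ r > 0, μ {x | ‖g x‖ ≤ r} ≤ ENNReal.ofReal (C * r ^ a)) :
    Integrable (fun x => log ‖g x‖) μ := by
  simpa only [Pi.sub_def, posLog_sub_posLog_inv] using
    (integrable_posLog_norm_of_ae_le hg hgR).sub
      (integrable_posLog_inv_norm_of_measure_le hg ha hC h)

theorem integral_abs_log_norm_le (hg : AEStronglyMeasurable g μ)
    (hgR : ∀ᵐ x ∂μ, ‖g x‖ ≤ R) (ha : 0 < a) (hC : 0 ≤ C)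
    (h : ∀ r > 0, μ {x | ‖g x‖ ≤ r} ≤ ENNReal.ofReal (C * r ^ a)) :
    ∫ x, |log ‖g x‖| ∂μ ≤ log⁺ R * μ.real univ + C / a := by
  simp only [abs_log_eq_posLog_add_posLog_inv]
  rw [integral_add (integrable_posLog_norm_of_ae_le hg hgR)
    (integrable_posLog_inv_norm_of_measure_le hg ha hC h)]
  exact add_le_add (integral_posLog_norm_le hgR) (integral_posLog_inv_norm_le hg ha hC h)

end

theorem stmt19_general {X : Type*} [MeasurableSpace X] (μ : Measure X) [IsFiniteMeasure μ]
    (f : X → ℂ) (hf : Measurable f) (B : ℝ) (hfB : ∀ x, ‖f x‖ ≤ B)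
    (κ C t₀ : ℝ) (hκ : κ ∈ Set.Ioc (0:ℝ) 1) (ht₀ : 0 < t₀)
    (hsub : ∀ z : ℂ, ∀ t : ℝ, 0 < t → t ≤ t₀ →
      μ {x | ‖f x - z‖ ^ 2 ≤ t} ≤ ENNReal.ofReal (C * t ^ κ)) :
    (∀ z : ℂ, Integrable (fun x => Real.log (‖f x - z‖)) μ) ∧
    (∀ K : Set ℂ, IsCompact K → ∃ M : ℝ, ∀ z ∈ K,
      ∫ x, |Real.log (‖f x - z‖)| ∂μ ≤ M) := by
  set C' := max C (μ.real univ / t₀ ^ κ)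
  have hC' : 0 ≤ C' :=
    (div_nonneg measureReal_nonneg (rpow_nonneg ht₀.le κ)).trans (le_max_right _ _)
  have h2κ : 0 < 2 * κ := by linarith [hκ.1]
  have hg (z : ℂ) : AEStronglyMeasurable (fun x => f x - z) μ :=
    (hf.sub_const z).aestronglyMeasurable
  have hbound (z : ℂ) : ∀ᵐ x ∂μ, ‖f x - z‖ ≤ |B| + ‖z‖ := ae_of_all _ fun x =>
    (norm_sub_le _ _).trans (add_le_add ((hfB x).trans (le_abs_self B)) le_rfl)
  have hlevel (z : ℂ) : ∀ r > 0, μ {x | ‖f x - z‖ ≤ r} ≤ ENNReal.ofReal (C' * r ^ (2 * κ)) := by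
    intro r hr
    have hsq : {x | ‖f x - z‖ ≤ r} = {x | ‖f x - z‖ ^ 2 ≤ r ^ 2} := by
      ext x
      simp only [mem_ofPred_eq, pow_le_pow_iff_left₀ (norm_nonneg _) hr.le two_ne_zero]
    rw [hsq, rpow_mul hr.le, rpow_two]
    exact measure_le_ofReal_max_mul_rpow hκ.1.le ht₀ (by positivity) (hsub z _ (by positivity))
  refine ⟨fun z => integrable_log_norm_of_measure_le (hg z) (hbound z) h2κ hC' (hlevel z),
    fun K hK => ?_⟩
  obtain ⟨ρ, hρ⟩ := hK.isBounded.subset_closedBall 0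
  refine ⟨log⁺ (|B| + ρ) * μ.real univ + C' / (2 * κ), fun z hz => ?_⟩
  have hzρ : ‖z‖ ≤ ρ := mem_closedBall_zero_iff.mp (hρ hz)
  calc ∫ x, |log ‖f x - z‖| ∂μ ≤ log⁺ (|B| + ‖z‖) * μ.real univ + C' / (2 * κ) :=
        integral_abs_log_norm_le (hg z) (hbound z) h2κ hC' (hlevel z)
    _ ≤ log⁺ (|B| + ρ) * μ.real univ + C' / (2 * κ) := by gcongr

/-- If `f` is a bounded measurable function on a finite measure space with the uniform
sublevel-set bound `μ{|f - z|² ≤ t} ≤ C t^κ` for `t ∈ (0, t₀]` and all `z ∈ ℂ`, then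
`x ↦ log|f(x) - z|` is integrable for every `z`, and `∫ |log|f - z|| dμ` is bounded
uniformly for `z` in any compact subset of `ℂ`. -/
theorem stmt19 {X : Type*} [MeasurableSpace X] (μ : Measure X) [IsFiniteMeasure μ]
    (f : X → ℂ) (hf : Measurable f) (B : ℝ) (hfB : ∀ x, ‖f x‖ ≤ B)
    (κ C t₀ : ℝ) (hκ : κ ∈ Set.Ioc (0:ℝ) 1) (hC : 0 < C) (ht₀ : 0 < t₀)
    (hsub : ∀ z : ℂ, ∀ t : ℝ, 0 < t → t ≤ t₀ →
      μ {x | ‖f x - z‖ ^ 2 ≤ t} ≤ ENNReal.ofReal (C * t ^ κ)) :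
    (∀ z : ℂ, Integrable (fun x => Real.log (‖f x - z‖)) μ) ∧
    (∀ K : Set ℂ, IsCompact K → ∃ M : ℝ, ∀ z ∈ K,
      ∫ x, |Real.log (‖f x - z‖)| ∂μ ≤ M) :=
  stmt19_general μ f hf B hfB κ C t₀ hκ ht₀ hsub
end
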